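/- arXiv:1710.01397 — 7 statements merged into one kernel-verified Lean document; each statement's English description precedes it below -/
import Mathlib

section
/- Let σ > 0 and set s₁ := σ(T⁵ + T¹⁰). For every a > 0 there exists a constant C > 0, depending on a, σ, λ, η⁰ and T, such that for all (t,x) ∈ Q_T one has |∂_t( ξ(t,x)^a e^{−2 s₁ α(t,x)} )| ≤ C T ξ(t,x)^{a + 6/5} e^{−2 s₁ α(t,x)}. -/
open Real Set Filter Topology

/-- The Carleman weight `α(t,x)`. -/
noncomputable def carlemanAlpha {X : Type*} (lam M T : ℝ) (η : X → ℝ) (t : ℝ) (x : X) : ℝ :=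
  (Real.exp (12 * lam * M) - Real.exp (lam * (10 * M + η x))) / (t ^ 5 * (T - t) ^ 5)

/-- The Carleman weight `ξ(t,x)`. -/
noncomputable def carlemanXi {X : Type*} (lam M T : ℝ) (η : X → ℝ) (t : ℝ) (x : X) : ℝ :=
  Real.exp (lam * (10 * M + η x)) / (t ^ 5 * (T - t) ^ 5)

set_option maxHeartbeats 1000000 in
/-- Auxiliary bound for the derivative expression. -/
lemma stmt4_key (T t s₁ a A B B₀ E : ℝ) (hT : 0 < T) (ht0 : 0 < t) (htT : t < T)
    (ha : 0 < a) (hs₁ : 0 < s₁) (hApos : 0 < A) (hBpos : 0 < B) (hB₀pos : 0 < B₀)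
    (hB₀B : B₀ ≤ B) (hBA : B ≤ A) (hEpos : 0 < E) :
    |(B / (t ^ 5 * (T - t) ^ 5)) ^ a * E *
        ((5 * t ^ 4 * (T - t) ^ 4 * (T - 2 * t)) / (t ^ 5 * (T - t) ^ 5)) *
        (2 * s₁ * (A - B) / (t ^ 5 * (T - t) ^ 5) - a)|
      ≤ (5 * (2 * s₁ * A + a * T ^ 10) / B₀ ^ ((6 : ℝ) / 5)) * T *
          (B / (t ^ 5 * (T - t) ^ 5)) ^ (a + 6 / 5) * E := by
  have hTt : 0 < T - t := by linarith
  set C := 5 * (2 * s₁ * A + a * T ^ 10) / B₀ ^ ((6 : ℝ) / 5) with hC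
  have hCpos : 0 < C := by positivity
  set u := t * (T - t) with hu
  have hupos : 0 < u := by positivity
  have hG5 : t ^ 5 * (T - t) ^ 5 = u ^ 5 := by rw [hu]; ring
  have hG4 : 5 * t ^ 4 * (T - t) ^ 4 * (T - 2 * t) = 5 * u ^ 4 * (T - 2 * t) := by
    rw [hu]; ring
  rw [hG5, hG4]
  set ξ := B / u ^ 5 with hξ
  have hξpos : 0 < ξ := by positivity
  have hAB : 0 ≤ A - B := by linarith
  -- the scalar factors
  have hK1 : |5 * u ^ 4 * (T - 2 * t) / u ^ 5| ≤ 5 * u ^ 4 * T / u ^ 5 := by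
    rw [abs_div, abs_of_pos (by positivity : (0:ℝ) < u ^ 5), abs_mul,
      abs_of_pos (by positivity : (0:ℝ) < 5 * u ^ 4)]
    have : |T - 2 * t| ≤ T := by
      rw [abs_le]; constructor <;> linarith
    apply div_le_div_of_nonneg_right ?_ (by positivity)
    · exact mul_le_mul_of_nonneg_left this (by positivity)
  have hK2 : |2 * s₁ * (A - B) / u ^ 5 - a| ≤ 2 * s₁ * (A - B) / u ^ 5 + a := by
    have h1 : 0 ≤ 2 * s₁ * (A - B) / u ^ 5 := by positivity
    rw [abs_le]; constructor <;> linarith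
  have hξ65 : ξ ^ ((6 : ℝ) / 5) = B ^ ((6 : ℝ) / 5) / u ^ 6 := by
    rw [hξ, Real.div_rpow hBpos.le (by positivity)]
    congr 1
    rw [← Real.rpow_natCast u 5, ← Real.rpow_natCast u 6, ← Real.rpow_mul hupos.le]
    norm_num
  have hu5 : u ^ 5 ≤ T ^ 10 := by
    have huT : u ≤ T ^ 2 := by nlinarith
    calc u ^ 5 ≤ (T ^ 2) ^ 5 := pow_le_pow_left₀ hupos.le huT 5
      _ = T ^ 10 := by ring
  have hB65 : B₀ ^ ((6 : ℝ) / 5) ≤ B ^ ((6 : ℝ) / 5) :=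
    Real.rpow_le_rpow hB₀pos.le hB₀B (by norm_num)
  have hCB0 : C * B₀ ^ ((6 : ℝ) / 5) = 5 * (2 * s₁ * A + a * T ^ 10) := by
    rw [hC, div_mul_cancel₀]
    positivity
  have hmain : |5 * u ^ 4 * (T - 2 * t) / u ^ 5| * |2 * s₁ * (A - B) / u ^ 5 - a|
      ≤ C * T * ξ ^ ((6 : ℝ) / 5) := by
    calc |5 * u ^ 4 * (T - 2 * t) / u ^ 5| * |2 * s₁ * (A - B) / u ^ 5 - a|
        ≤ (5 * u ^ 4 * T / u ^ 5) * (2 * s₁ * (A - B) / u ^ 5 + a) := by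
          apply mul_le_mul hK1 hK2 (abs_nonneg _) (by positivity)
      _ = 5 * T * (2 * s₁ * (A - B) + a * u ^ 5) / u ^ 6 := by
          field_simp
      _ ≤ C * T * B ^ ((6 : ℝ) / 5) / u ^ 6 := by
          have h1 : C * B₀ ^ ((6 : ℝ) / 5) ≤ C * B ^ ((6 : ℝ) / 5) :=
            mul_le_mul_of_nonneg_left hB65 hCpos.le
          have h2 : 5 * (2 * s₁ * (A - B) + a * u ^ 5) ≤ C * B ^ ((6 : ℝ) / 5) := by
            nlinarith [mul_le_mul_of_nonneg_left hu5 ha.le, hs₁, hBpos]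
          have h3 : 5 * T * (2 * s₁ * (A - B) + a * u ^ 5) ≤ C * T * B ^ ((6 : ℝ) / 5) := by
            calc 5 * T * (2 * s₁ * (A - B) + a * u ^ 5)
                = T * (5 * (2 * s₁ * (A - B) + a * u ^ 5)) := by ring
              _ ≤ T * (C * B ^ ((6 : ℝ) / 5)) := mul_le_mul_of_nonneg_left h2 hT.le
              _ = C * T * B ^ ((6 : ℝ) / 5) := by ring
          exact div_le_div_of_nonneg_right h3 (by positivity)
      _ = C * T * ξ ^ ((6 : ℝ) / 5) := by rw [hξ65]; ring
  calc |ξ ^ a * E * (5 * u ^ 4 * (T - 2 * t) / u ^ 5) * (2 * s₁ * (A - B) / u ^ 5 - a)|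
      = ξ ^ a * E * (|5 * u ^ 4 * (T - 2 * t) / u ^ 5| * |2 * s₁ * (A - B) / u ^ 5 - a|) := by
        rw [abs_mul, abs_mul, abs_mul, abs_of_pos (by positivity : (0:ℝ) < ξ ^ a),
          abs_of_pos hEpos]
        ring
    _ ≤ ξ ^ a * E * (C * T * ξ ^ ((6 : ℝ) / 5)) := by
        exact mul_le_mul_of_nonneg_left hmain (by positivity)
    _ = C * T * ξ ^ (a + 6 / 5) * E := by
        rw [Real.rpow_add hξpos]; ring

/-- let `σ > 0` and `s₁ := σ(T⁵+T¹⁰)`.  For every `a > 0` there is a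
constant `C > 0` (depending on `a`, `σ`, `λ`, `η⁰`, `T`) such that for all
`(t,x) ∈ Q_T`, `|∂_t(ξ(t,x)^a e^{−2s₁α(t,x)})| ≤ C T ξ(t,x)^{a+6/5} e^{−2s₁α(t,x)}`. -/
theorem stmt_4 {n : ℕ}
    (Ω : Set (EuclideanSpace ℝ (Fin n))) (hne : Ω.Nonempty) (hop : IsOpen Ω)
    (hbd : Bornology.IsBounded Ω)
    (T lam : ℝ) (hT : 0 < T) (hlam : 0 < lam)
    (η : EuclideanSpace ℝ (Fin n) → ℝ)
    (hηc : ContinuousOn η (closure Ω))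
    (hηpos : ∀ x ∈ Ω, 0 < η x)
    (hηfr : ∀ x ∈ frontier Ω, η x = 0)
    (M : ℝ) (hM : IsGreatest (η '' closure Ω) M) (hMpos : 0 < M)
    (σ : ℝ) (hσ : 0 < σ) (s₁ : ℝ) (hs₁ : s₁ = σ * (T ^ 5 + T ^ 10)) :
    ∀ a : ℝ, 0 < a → ∃ C : ℝ, 0 < C ∧
      ∀ t ∈ Ioo (0 : ℝ) T, ∀ x ∈ Ω,
        |deriv (fun τ => carlemanXi lam M T η τ x ^ a *
            Real.exp (-(2 * s₁ * carlemanAlpha lam M T η τ x))) t|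
          ≤ C * T * carlemanXi lam M T η t x ^ (a + 6 / 5) *
              Real.exp (-(2 * s₁ * carlemanAlpha lam M T η t x)) := by
  intro a ha
  have hs₁pos : 0 < s₁ := by rw [hs₁]; positivity
  refine ⟨5 * (2 * s₁ * Real.exp (12 * lam * M) + a * T ^ 10) /
      Real.exp (lam * (10 * M)) ^ ((6 : ℝ) / 5), by positivity, ?_⟩
  intro t ht x hx
  obtain ⟨ht0, htT⟩ := ht
  have hTt : 0 < T - t := by linarith
  have hηx : 0 < η x := hηpos x hx
  have hηM : η x ≤ M := hM.2 ⟨x, subset_closure hx, rfl⟩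
  simp only [carlemanXi, carlemanAlpha]
  set A := Real.exp (12 * lam * M) with hA
  set B := Real.exp (lam * (10 * M + η x)) with hBdef
  set B₀ := Real.exp (lam * (10 * M)) with hB₀
  have hApos : 0 < A := Real.exp_pos _
  have hBpos : 0 < B := Real.exp_pos _
  have hB₀pos : 0 < B₀ := Real.exp_pos _
  have hB₀B : B₀ ≤ B := Real.exp_le_exp.mpr (by nlinarith)
  have hBA : B ≤ A := Real.exp_le_exp.mpr (by nlinarith)
  -- derivative computation
  have hg : HasDerivAt (fun τ : ℝ => τ ^ 5 * (T - τ) ^ 5)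
      (5 * t ^ 4 * (T - t) ^ 4 * (T - 2 * t)) t := by
    have h1 : HasDerivAt (fun τ : ℝ => τ ^ 5) (5 * t ^ 4) t := by
      simpa using hasDerivAt_pow 5 t
    have h2 : HasDerivAt (fun τ : ℝ => (T - τ) ^ 5) (5 * (T - t) ^ 4 * (-1)) t := by
      have := ((hasDerivAt_id t).const_sub T).fun_pow 5
      simpa using this
    have h3 := h1.mul h2
    exact h3.congr_deriv (by ring)
  have hGpos : 0 < t ^ 5 * (T - t) ^ 5 := by positivity
  have hGne : t ^ 5 * (T - t) ^ 5 ≠ 0 := ne_of_gt hGpos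
  have hξa : HasDerivAt (fun τ : ℝ => (B / (τ ^ 5 * (T - τ) ^ 5)) ^ a)
      (((0 * (t ^ 5 * (T - t) ^ 5) - B * (5 * t ^ 4 * (T - t) ^ 4 * (T - 2 * t))) /
        (t ^ 5 * (T - t) ^ 5) ^ 2) * a * (B / (t ^ 5 * (T - t) ^ 5)) ^ (a - 1)) t :=
    ((hasDerivAt_const t B).div hg hGne).rpow_const (Or.inl (by dsimp; positivity))
  have hE := ((((hasDerivAt_const t (A - B)).div hg hGne).const_mul (2 * s₁)).neg).exp
  have hfull := hξa.mul hE
  set E := Real.exp (-(2 * s₁ * ((A - B) / (t ^ 5 * (T - t) ^ 5)))) with hEdef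
  have hEpos : 0 < E := Real.exp_pos _
  have hD : HasDerivAt (fun τ : ℝ => (B / (τ ^ 5 * (T - τ) ^ 5)) ^ a *
      Real.exp (-(2 * s₁ * ((A - B) / (τ ^ 5 * (T - τ) ^ 5)))))
      ((B / (t ^ 5 * (T - t) ^ 5)) ^ a * E *
        ((5 * t ^ 4 * (T - t) ^ 4 * (T - 2 * t)) / (t ^ 5 * (T - t) ^ 5)) *
        (2 * s₁ * (A - B) / (t ^ 5 * (T - t) ^ 5) - a)) t := by
    refine hfull.congr_deriv ?_
    simp only [Pi.neg_apply, Pi.div_apply, ← hEdef]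
    have hne : (B / (t ^ 5 * (T - t) ^ 5) : ℝ) ≠ 0 := by positivity
    have hr : (B / (t ^ 5 * (T - t) ^ 5) : ℝ) ^ a
        = (B / (t ^ 5 * (T - t) ^ 5)) ^ (a - 1) * (B / (t ^ 5 * (T - t) ^ 5)) := by
      rw [← Real.rpow_add_one hne]; norm_num
    rw [hr]
    generalize (B / (t ^ 5 * (T - t) ^ 5) : ℝ) ^ (a - 1) = P
    field_simp
    ring
  rw [hD.deriv]
  exact stmt4_key T t s₁ a A B B₀ E hT ht0 htT ha hs₁pos hApos hBpos hB₀pos hB₀B hBA hEpos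
end

section
/- Let r ∈ ℕ and assume η⁰ is r-times continuously differentiable on an open neighborhood of cl(Ω). Let σ > 0 and set s₁ := σ(T⁵ + T¹⁰). For every a > 0 there exists a constant C > 0, depending on a, r, σ, λ, η⁰ and T, such that for all (t,x) ∈ Q_T the r-th iterated spatial derivative satisfies ‖∇_x^r( ξ(t,x)^a e^{−2 s₁ α(t,x)} )‖ ≤ C ξ(t,x)^{a + r} e^{−2 s₁ α(t,x)}, where ‖·‖ denotes the norm of the r-th iterated derivative. -/
open Real Set Filter Topology

lemma pow_le_max_pow {X m₀ : ℝ} (hm : 0 < m₀) (hX : m₀ ≤ X) {j k : ℕ} (hjk : j ≤ k) :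
    X ^ j ≤ (max 1 m₀⁻¹) ^ k * X ^ k := by
  have hX0 : 0 < X := lt_of_lt_of_le hm hX
  have hm1 : (1:ℝ) ≤ max 1 m₀⁻¹ := le_max_left _ _
  have hXk : X ^ k = X ^ j * X ^ (k - j) := by
    rw [← pow_add, Nat.add_sub_cancel' hjk]
  have h1 : (1:ℝ) ≤ (max 1 m₀⁻¹) ^ k * X ^ (k - j) := by
    have hmx : (1:ℝ) ≤ max 1 m₀⁻¹ * X := by
      calc (1:ℝ) = m₀⁻¹ * m₀ := (inv_mul_cancel₀ hm.ne').symm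
      _ ≤ max 1 m₀⁻¹ * X := by
          apply mul_le_mul (le_max_right _ _) hX hm.le (le_trans (by norm_num) hm1)
    calc (1:ℝ) ≤ (max 1 m₀⁻¹ * X) ^ (k - j) := one_le_pow₀ hmx
    _ = (max 1 m₀⁻¹) ^ (k - j) * X ^ (k - j) := mul_pow _ _ _
    _ ≤ (max 1 m₀⁻¹) ^ k * X ^ (k - j) := by
        gcongr
        · exact Nat.sub_le _ _
  calc X ^ j = X ^ j * 1 := (mul_one _).symm
  _ ≤ X ^ j * ((max 1 m₀⁻¹) ^ k * X ^ (k - j)) := by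
      exact mul_le_mul_of_nonneg_left h1 (by positivity)
  _ = (max 1 m₀⁻¹) ^ k * X ^ k := by rw [hXk]; ring

lemma exists_coeffs (a b : ℝ) :
    ∀ k : ℕ, ∃ co : ℕ → ℝ, (∀ j, k + 1 ≤ j → co j = 0) ∧
      ∀ B p c u : ℝ,
        iteratedDeriv k (fun v => B * Real.exp (a * (b * v + c) + p * Real.exp (b * v + c))) u
          = (∑ j ∈ Finset.range (k + 1), co j * (p * Real.exp (b * u + c)) ^ j)
            * (B * Real.exp (a * (b * u + c) + p * Real.exp (b * u + c))) := by
  intro k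
  induction k with
  | zero =>
    refine ⟨fun j => if j = 0 then 1 else 0, ?_, ?_⟩
    · intro j hj
      have hj0 : j ≠ 0 := by omega
      simp [hj0]
    · intro B p c u; simp [iteratedDeriv_zero]
  | succ k ih =>
    obtain ⟨co, hz, heq⟩ := ih
    refine ⟨fun j => b * (((j:ℝ) + a) * co j + if j = 0 then 0 else co (j-1)), ?_, ?_⟩
    · intro j hj
      have h1 : co j = 0 := hz j (by omega)
      have h2 : j ≠ 0 := by omega
      have h3 : co (j-1) = 0 := hz (j-1) (by omega)
      simp [h1, h2, h3]
    · intro B p c u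
      rw [iteratedDeriv_succ]
      have hfe : iteratedDeriv k
          (fun v => B * Real.exp (a * (b * v + c) + p * Real.exp (b * v + c)))
          = fun u => (∑ j ∈ Finset.range (k + 1), co j * (p * Real.exp (b * u + c)) ^ j)
            * (B * Real.exp (a * (b * u + c) + p * Real.exp (b * u + c))) :=
        funext (heq B p c)
      rw [hfe]
      -- derivatives
      have hw : HasDerivAt (fun v : ℝ => b * v + c) b u := by
        simpa using ((hasDerivAt_id u).const_mul b).add_const c
      have hexp : HasDerivAt (fun v => Real.exp (b * v + c)) (Real.exp (b * u + c) * b) u :=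
        hw.exp
      have hX : HasDerivAt (fun v => p * Real.exp (b * v + c))
          (p * (Real.exp (b * u + c) * b)) u := hexp.const_mul p
      have hG : HasDerivAt (fun v => a * (b * v + c) + p * Real.exp (b * v + c))
          (a * b + p * (Real.exp (b * u + c) * b)) u := (hw.const_mul a).add hX
      have hE : HasDerivAt (fun v => B * Real.exp (a * (b * v + c) + p * Real.exp (b * v + c)))
          (B * (Real.exp (a * (b * u + c) + p * Real.exp (b * u + c))
            * (a * b + p * (Real.exp (b * u + c) * b)))) u := hG.exp.const_mul B
      have hS : HasDerivAt
          (fun v => ∑ j ∈ Finset.range (k + 1), co j * (p * Real.exp (b * v + c)) ^ j)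
          (∑ j ∈ Finset.range (k + 1), co j *
            ((j:ℝ) * (p * Real.exp (b * u + c)) ^ (j - 1) * (p * (Real.exp (b * u + c) * b)))) u :=
        HasDerivAt.fun_sum fun j _ => (hX.pow j).const_mul (co j)
      rw [(hS.fun_mul hE).deriv]
      set X := p * Real.exp (b * u + c) with hXdef
      set Eu := B * Real.exp (a * (b * u + c) + p * Real.exp (b * u + c)) with hEdef
      have hpow : ∀ j : ℕ, co j * ((j:ℝ) * X ^ (j - 1) * (p * (Real.exp (b * u + c) * b)))
          = co j * (b * ((j:ℝ) * X ^ j)) := by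
        intro j
        cases j with
        | zero => simp
        | succ i =>
          simp only [Nat.add_sub_cancel, hXdef]
          rw [pow_succ]
          push_cast
          ring
      rw [Finset.sum_congr rfl (fun j _ => hpow j)]
      -- key sum identity
      have S1 : (∑ j ∈ Finset.range (k + 2),
            (b * (((j:ℝ) + a) * co j + if j = 0 then 0 else co (j-1))) * X ^ j)
          = (∑ j ∈ Finset.range (k + 1), b * (((j:ℝ) + a) * co j) * X ^ j)
            + (∑ j ∈ Finset.range (k + 1), b * co j * X ^ (j + 1)) := by
        have hsplit : ∀ j ∈ Finset.range (k + 2),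
            (b * (((j:ℝ) + a) * co j + if j = 0 then 0 else co (j-1))) * X ^ j
            = b * (((j:ℝ) + a) * co j) * X ^ j
              + (b * (if j = 0 then 0 else co (j-1))) * X ^ j := by
          intro j _; ring
        rw [Finset.sum_congr rfl hsplit, Finset.sum_add_distrib]
        congr 1
        · rw [Finset.sum_range_succ, hz (k+1) le_rfl]
          simp
        · rw [Finset.sum_range_succ']
          simp only [Nat.add_sub_cancel, if_neg (Nat.succ_ne_zero _)]
          simp
      rw [S1, add_mul, Finset.sum_mul, Finset.sum_mul, ← Finset.sum_add_distrib]
      rw [Finset.sum_mul, Finset.sum_mul, ← Finset.sum_add_distrib]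
      apply Finset.sum_congr rfl
      intro j _
      simp only [hXdef, hEdef, pow_succ]
      ring

lemma keyBound (a b : ℝ) (k : ℕ) :
    ∃ C : ℝ, 0 ≤ C ∧ ∀ B p c u m₀ : ℝ, 0 ≤ B → 0 < m₀ → m₀ ≤ p * Real.exp (b * u + c) →
      |iteratedDeriv k (fun v => B * Real.exp (a * (b * v + c) + p * Real.exp (b * v + c))) u|
        ≤ C * ((max 1 m₀⁻¹) ^ k * ((p * Real.exp (b * u + c)) ^ k
            * (B * Real.exp (a * (b * u + c) + p * Real.exp (b * u + c))))) := by
  obtain ⟨co, hz, heq⟩ := exists_coeffs a b k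
  refine ⟨∑ j ∈ Finset.range (k + 1), |co j|,
    Finset.sum_nonneg (fun _ _ => abs_nonneg _), ?_⟩
  intro B p c u m₀ hB hm hX
  rw [heq, abs_mul]
  have hXpos : 0 < p * Real.exp (b * u + c) := lt_of_lt_of_le hm hX
  have hE0 : 0 ≤ B * Real.exp (a * (b * u + c) + p * Real.exp (b * u + c)) :=
    mul_nonneg hB (Real.exp_pos _).le
  rw [abs_of_nonneg hE0]
  have hSb : |∑ j ∈ Finset.range (k + 1), co j * (p * Real.exp (b * u + c)) ^ j|
      ≤ (∑ j ∈ Finset.range (k + 1), |co j|)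
        * ((max 1 m₀⁻¹) ^ k * (p * Real.exp (b * u + c)) ^ k) := by
    calc |∑ j ∈ Finset.range (k + 1), co j * (p * Real.exp (b * u + c)) ^ j|
        ≤ ∑ j ∈ Finset.range (k + 1), |co j * (p * Real.exp (b * u + c)) ^ j| :=
          Finset.abs_sum_le_sum_abs _ _
      _ ≤ ∑ j ∈ Finset.range (k + 1),
            |co j| * ((max 1 m₀⁻¹) ^ k * (p * Real.exp (b * u + c)) ^ k) := by
          apply Finset.sum_le_sum
          intro j hj
          rw [abs_mul, abs_pow, abs_of_pos hXpos]
          exact mul_le_mul_of_nonneg_left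
            (pow_le_max_pow hm hX (Nat.lt_succ_iff.mp (Finset.mem_range.mp hj)))
            (abs_nonneg _)
      _ = (∑ j ∈ Finset.range (k + 1), |co j|)
            * ((max 1 m₀⁻¹) ^ k * (p * Real.exp (b * u + c)) ^ k) := by
          rw [← Finset.sum_mul]
  calc |∑ j ∈ Finset.range (k + 1), co j * (p * Real.exp (b * u + c)) ^ j|
        * (B * Real.exp (a * (b * u + c) + p * Real.exp (b * u + c)))
      ≤ ((∑ j ∈ Finset.range (k + 1), |co j|)
          * ((max 1 m₀⁻¹) ^ k * (p * Real.exp (b * u + c)) ^ k))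
        * (B * Real.exp (a * (b * u + c) + p * Real.exp (b * u + c))) :=
        mul_le_mul_of_nonneg_right hSb hE0
    _ = (∑ j ∈ Finset.range (k + 1), |co j|)
        * ((max 1 m₀⁻¹) ^ k * ((p * Real.exp (b * u + c)) ^ k
          * (B * Real.exp (a * (b * u + c) + p * Real.exp (b * u + c))))) := by ring

lemma exists_uniform (P : ℕ → ℝ → Prop) (mono : ∀ i C D, C ≤ D → P i C → P i D)
    (h : ∀ i, ∃ C, 0 ≤ C ∧ P i C) : ∀ r, ∃ C, 0 ≤ C ∧ ∀ i ≤ r, P i C := by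
  intro r
  induction r with
  | zero =>
    obtain ⟨C, h0, hP⟩ := h 0
    exact ⟨C, h0, fun i hi => by rw [Nat.le_zero.mp hi]; exact hP⟩
  | succ r ih =>
    obtain ⟨C, hC, hPC⟩ := ih
    obtain ⟨D, hD, hPD⟩ := h (r + 1)
    refine ⟨max C D, le_trans hC (le_max_left _ _), fun i hi => ?_⟩
    rcases Nat.lt_succ_iff_lt_or_eq.mp (Nat.lt_succ_of_le hi) with h' | h'
    · exact mono i C _ (le_max_left _ _) (hPC i (Nat.lt_succ_iff.mp h'))
    · rw [h']; exact mono _ D _ (le_max_right _ _) hPD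
/-- let `r ∈ ℕ`, assume `η⁰ ∈ C^r` on an open neighborhood of `cl(Ω)`,
let `σ > 0` and `s₁ := σ(T⁵+T¹⁰)`.  For every `a > 0` there is `C > 0` (depending on
`a`, `r`, `σ`, `λ`, `η⁰`, `T`) such that for all `(t,x) ∈ Q_T`,
`‖∇_x^r(ξ^a e^{−2s₁α})‖ ≤ C ξ^{a+r} e^{−2s₁α}` at `(t,x)`. -/
theorem stmt_6 {n : ℕ}
    (Ω : Set (EuclideanSpace ℝ (Fin n))) (hne : Ω.Nonempty) (hop : IsOpen Ω)
    (hbd : Bornology.IsBounded Ω)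
    (T lam : ℝ) (hT : 0 < T) (hlam : 0 < lam)
    (η : EuclideanSpace ℝ (Fin n) → ℝ)
    (hηc : ContinuousOn η (closure Ω))
    (hηpos : ∀ x ∈ Ω, 0 < η x)
    (hηfr : ∀ x ∈ frontier Ω, η x = 0)
    (M : ℝ) (hM : IsGreatest (η '' closure Ω) M) (hMpos : 0 < M)
    (r : ℕ)
    (U : Set (EuclideanSpace ℝ (Fin n))) (hU : IsOpen U) (hclU : closure Ω ⊆ U)
    (hηr : ContDiffOn ℝ r η U)
    (σ : ℝ) (hσ : 0 < σ) (s₁ : ℝ) (hs₁ : s₁ = σ * (T ^ 5 + T ^ 10)) :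
    ∀ a : ℝ, 0 < a → ∃ C : ℝ, 0 < C ∧
      ∀ t ∈ Ioo (0 : ℝ) T, ∀ x ∈ Ω,
        ‖iteratedFDeriv ℝ r (fun y => carlemanXi lam M T η t y ^ a *
            Real.exp (-(2 * s₁ * carlemanAlpha lam M T η t y))) x‖
          ≤ C * carlemanXi lam M T η t x ^ (a + (r : ℝ)) *
              Real.exp (-(2 * s₁ * carlemanAlpha lam M T η t x)) := by
  intro a ha
  have hs1 : 0 < s₁ := by rw [hs₁]; positivity
  -- lower bound for ξ
  set c₀ : ℝ := Real.exp (lam * (10 * M)) / ((T ^ 2 / 4) ^ 5) with hc₀def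
  have hc₀ : 0 < c₀ := by positivity
  have hgle : ∀ t ∈ Ioo (0:ℝ) T, 0 < t ^ 5 * (T - t) ^ 5 ∧ t ^ 5 * (T - t) ^ 5 ≤ (T ^ 2 / 4) ^ 5 := by
    intro t ht
    obtain ⟨h0, hT'⟩ := ht
    have hTt : 0 < T - t := sub_pos.mpr hT'
    constructor
    · positivity
    · have h1 : t * (T - t) ≤ T ^ 2 / 4 := by nlinarith [sq_nonneg (t - T / 2)]
      calc t ^ 5 * (T - t) ^ 5 = (t * (T - t)) ^ 5 := (mul_pow _ _ _).symm
      _ ≤ (T ^ 2 / 4) ^ 5 := pow_le_pow_left₀ (by positivity) h1 5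
  have hxi : ∀ t ∈ Ioo (0:ℝ) T, ∀ y ∈ Ω, c₀ ≤ carlemanXi lam M T η t y := by
    intro t ht y hy
    obtain ⟨hg0, hgle'⟩ := hgle t ht
    have he : Real.exp (lam * (10 * M)) ≤ Real.exp (lam * (10 * M + η y)) := by
      apply Real.exp_le_exp.mpr
      nlinarith [hηpos y hy]
    calc c₀ = Real.exp (lam * (10 * M)) / ((T ^ 2 / 4) ^ 5) := rfl
    _ ≤ Real.exp (lam * (10 * M + η y)) / (t ^ 5 * (T - t) ^ 5) :=
        div_le_div₀ (Real.exp_pos _).le he hg0 hgle'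
    _ = carlemanXi lam M T η t y := rfl
  set m₀ : ℝ := 2 * s₁ * c₀ with hm₀def
  have hm₀ : 0 < m₀ := by positivity
  have hm1 : (1:ℝ) ≤ max 1 m₀⁻¹ := le_max_left _ _
  -- uniform bound on derivatives of η on closure Ω
  have hcompact : IsCompact (closure Ω) :=
    Metric.isCompact_of_isClosed_isBounded isClosed_closure hbd.closure
  obtain ⟨D₀, hD₀0, hD₀⟩ := exists_uniform
    (fun i C => i ≤ r → ∀ y ∈ closure Ω, ‖iteratedFDerivWithin ℝ i η U y‖ ≤ C)
    (fun i C D hCD hP hir y hy => (hP hir y hy).trans hCD)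
    (fun i => by
      by_cases hi : i ≤ r
      · have hcont : ContinuousOn (iteratedFDerivWithin ℝ i η U) (closure Ω) :=
          (hηr.continuousOn_iteratedFDerivWithin (by exact_mod_cast hi) hU.uniqueDiffOn).mono hclU
        obtain ⟨Di, hDi⟩ := hcompact.exists_bound_of_continuousOn hcont
        exact ⟨max Di 0, le_max_right _ _, fun _ y hy => (hDi y hy).trans (le_max_left _ _)⟩
      · exact ⟨0, le_rfl, fun h => absurd h hi⟩) r
  set D : ℝ := max 1 D₀ with hDdef
  have hD1 : (1:ℝ) ≤ D := le_max_left _ _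
  -- uniform coefficient bound for 1D derivatives
  obtain ⟨Cu, hCu0, hCu⟩ := exists_uniform
    (fun i C => ∀ B p cc u m₀' : ℝ, 0 ≤ B → 0 < m₀' → m₀' ≤ p * Real.exp (lam * u + cc) →
      |iteratedDeriv i (fun v => B * Real.exp (a * (lam * v + cc) + p * Real.exp (lam * v + cc))) u|
        ≤ C * ((max 1 m₀'⁻¹) ^ i * ((p * Real.exp (lam * u + cc)) ^ i
            * (B * Real.exp (a * (lam * u + cc) + p * Real.exp (lam * u + cc))))))
    (fun i C D' hCD hP B p cc u m₀' hB hm hXb => by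
      refine (hP B p cc u m₀' hB hm hXb).trans (mul_le_mul_of_nonneg_right hCD ?_)
      have hXpos : 0 < p * Real.exp (lam * u + cc) := lt_of_lt_of_le hm hXb
      have h1 : (0:ℝ) ≤ max 1 m₀'⁻¹ := le_trans zero_le_one (le_max_left _ _)
      exact mul_nonneg (pow_nonneg h1 _) (mul_nonneg (pow_nonneg hXpos.le _)
        (mul_nonneg hB (Real.exp_pos _).le)))
    (keyBound a lam) r
  refine ⟨(r.factorial : ℝ) * (Cu * (max 1 m₀⁻¹) ^ (2 * r) * (2 * s₁) ^ r + 1) * D ^ r, ?_, ?_⟩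
  · have h1 : 0 ≤ Cu * (max 1 m₀⁻¹) ^ (2 * r) * (2 * s₁) ^ r :=
      mul_nonneg (mul_nonneg hCu0 (by positivity)) (by positivity)
    have h2 : (0:ℝ) < r.factorial := by exact_mod_cast r.factorial_pos
    have h3 : (0:ℝ) < D ^ r := pow_pos (lt_of_lt_of_le one_pos hD1) r
    exact mul_pos (mul_pos h2 (by linarith)) h3
  intro t ht x hx
  have hxU : x ∈ U := hclU (subset_closure hx)
  obtain ⟨hg0, -⟩ := hgle t ht
  set g : ℝ := t ^ 5 * (T - t) ^ 5 with hgdef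
  set p : ℝ := 2 * s₁ / g with hpdef
  have hp : 0 < p := by positivity
  set K : ℝ := Real.exp (12 * lam * M) with hKdef
  set B : ℝ := Real.exp (-(2 * s₁ * K / g)) / g ^ a with hBdef
  have hB : 0 < B := div_pos (Real.exp_pos _) (Real.rpow_pos_of_pos hg0 a)
  -- pointwise identity
  have hfeq : ∀ u : ℝ,
      (Real.exp (lam * (10 * M + u)) / g) ^ a
        * Real.exp (-(2 * s₁ * ((K - Real.exp (lam * (10 * M + u))) / g)))
      = B * Real.exp (a * (lam * u + lam * (10 * M))
          + p * Real.exp (lam * u + lam * (10 * M))) := by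
    intro u
    have hw : lam * (10 * M + u) = lam * u + lam * (10 * M) := by ring
    rw [hw]
    set w : ℝ := lam * u + lam * (10 * M) with hwdef
    rw [Real.div_rpow (Real.exp_pos w).le hg0.le, ← Real.exp_mul]
    have h1 : Real.exp (-(2 * s₁ * ((K - Real.exp w) / g)))
        = Real.exp (-(2 * s₁ * K / g)) * Real.exp (p * Real.exp w) := by
      rw [← Real.exp_add]
      congr 1
      rw [hpdef]
      field_simp
      ring
    rw [h1, hBdef, mul_comm w a, Real.exp_add (a * w) (p * Real.exp w)]
    ring
  have hfun : (fun y => carlemanXi lam M T η t y ^ a *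
        Real.exp (-(2 * s₁ * carlemanAlpha lam M T η t y)))
      = (fun u => B * Real.exp (a * (lam * u + lam * (10 * M))
          + p * Real.exp (lam * u + lam * (10 * M)))) ∘ η := by
    funext y
    simp only [carlemanXi, carlemanAlpha, Function.comp_apply]
    exact hfeq (η y)
  -- smoothness of the outer function
  have hlin : ContDiff ℝ (r : WithTop ℕ∞) (fun u : ℝ => lam * u + lam * (10 * M)) :=
    (contDiff_const.mul contDiff_id).add contDiff_const
  have hinner : ContDiff ℝ (r : WithTop ℕ∞)
      (fun u : ℝ => a * (lam * u + lam * (10 * M))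
        + p * Real.exp (lam * u + lam * (10 * M))) :=
    (contDiff_const.mul hlin).add
      (contDiff_const.mul ((Real.contDiff_exp.of_le le_top).comp hlin))
  have hhd : ContDiff ℝ (r : WithTop ℕ∞)
      (fun u : ℝ => B * Real.exp (a * (lam * u + lam * (10 * M))
        + p * Real.exp (lam * u + lam * (10 * M)))) :=
    contDiff_const.mul ((Real.contDiff_exp.of_le le_top).comp hinner)
  set ξx : ℝ := carlemanXi lam M T η t x with hξdef
  have hξc₀ : c₀ ≤ ξx := hxi t ht x hx
  have hξpos : 0 < ξx := lt_of_lt_of_le hc₀ hξc₀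
  set ex : ℝ := Real.exp (-(2 * s₁ * carlemanAlpha lam M T η t x)) with hexdef
  have hexpos : 0 < ex := Real.exp_pos _
  have hXeq : p * Real.exp (lam * (η x) + lam * (10 * M)) = 2 * s₁ * ξx := by
    rw [hξdef]
    simp only [carlemanXi]
    rw [show lam * (η x) + lam * (10 * M) = lam * (10 * M + η x) by ring]
    rw [hpdef]
    ring
  have hm₀le : m₀ ≤ p * Real.exp (lam * (η x) + lam * (10 * M)) := by
    rw [hXeq, hm₀def]
    have := mul_le_mul_of_nonneg_left hξc₀ (by positivity : (0:ℝ) ≤ 2 * s₁)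
    linarith
  have hEeq : B * Real.exp (a * (lam * (η x) + lam * (10 * M))
      + p * Real.exp (lam * (η x) + lam * (10 * M))) = ξx ^ a * ex := by
    rw [hξdef, hexdef]
    simp only [carlemanXi, carlemanAlpha]
    exact (hfeq (η x)).symm
  set Cpt : ℝ := Cu * (max 1 m₀⁻¹) ^ (2 * r) * (2 * s₁) ^ r * ξx ^ r * (ξx ^ a * ex)
    with hCptdef
  -- bound on the derivatives of the outer function
  have hC : ∀ i, i ≤ r → ‖iteratedFDerivWithin ℝ i
      (fun u : ℝ => B * Real.exp (a * (lam * u + lam * (10 * M))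
        + p * Real.exp (lam * u + lam * (10 * M)))) univ (η x)‖ ≤ Cpt := by
    intro i hi
    rw [iteratedFDerivWithin_univ, norm_iteratedFDeriv_eq_norm_iteratedDeriv,
      Real.norm_eq_abs]
    refine (hCu i hi B p (lam * (10 * M)) (η x) m₀ hB.le hm₀ hm₀le).trans ?_
    rw [hEeq, hXeq]
    calc Cu * ((max 1 m₀⁻¹) ^ i * ((2 * s₁ * ξx) ^ i * (ξx ^ a * ex)))
        ≤ Cu * ((max 1 m₀⁻¹) ^ r *
            (((max 1 m₀⁻¹) ^ r * (2 * s₁ * ξx) ^ r) * (ξx ^ a * ex))) := by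
          apply mul_le_mul_of_nonneg_left _ hCu0
          have hXp : (0:ℝ) < 2 * s₁ * ξx := by positivity
          have hξa : (0:ℝ) ≤ ξx ^ a * ex :=
            mul_nonneg (Real.rpow_nonneg hξpos.le a) hexpos.le
          apply mul_le_mul (pow_le_pow_right₀ hm1 hi)
            (mul_le_mul_of_nonneg_right
              (by rw [hXeq] at hm₀le; exact pow_le_max_pow hm₀ hm₀le hi) hξa)
            (mul_nonneg (pow_nonneg hXp.le _) hξa)
            (pow_nonneg (le_trans zero_le_one hm1) _)
      _ = Cpt := by
          rw [hCptdef]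
          ring
  -- bound on the derivatives of η
  have hD : ∀ i, 1 ≤ i → i ≤ r → ‖iteratedFDerivWithin ℝ i η U x‖ ≤ D ^ i := by
    intro i h1 hir
    refine (hD₀ i hir hir x (subset_closure hx)).trans ?_
    calc D₀ ≤ D := le_max_right _ _
    _ ≤ D ^ i := le_self_pow₀ hD1 (by omega)
  have hcomp := norm_iteratedFDerivWithin_comp_le (𝕜 := ℝ) (n := r)
    (N := (r : WithTop ℕ∞)) hhd.contDiffOn hηr le_rfl uniqueDiffOn_univ
    hU.uniqueDiffOn (mapsTo_univ η U) hxU hC hD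
  rw [hfun, ← iteratedFDerivWithin_of_isOpen (𝕜 := ℝ) r hU hxU]
  refine hcomp.trans ?_
  have hrw : ξx ^ (a + (r : ℝ)) = ξx ^ a * ξx ^ r := by
    rw [Real.rpow_add hξpos, Real.rpow_natCast]
  rw [hrw, hCptdef]
  have hfact : (0:ℝ) ≤ r.factorial := by positivity
  have hDr : (0:ℝ) ≤ D ^ r := pow_nonneg (le_trans zero_le_one hD1) r
  have hbig : (0:ℝ) ≤ (r.factorial : ℝ) * D ^ r * ξx ^ r * (ξx ^ a * ex) := by
    have := Real.rpow_nonneg hξpos.le a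
    positivity
  calc (r.factorial : ℝ) *
        (Cu * (max 1 m₀⁻¹) ^ (2 * r) * (2 * s₁) ^ r * ξx ^ r * (ξx ^ a * ex)) * D ^ r
      = (Cu * (max 1 m₀⁻¹) ^ (2 * r) * (2 * s₁) ^ r) *
          ((r.factorial : ℝ) * D ^ r * ξx ^ r * (ξx ^ a * ex)) := by ring
    _ ≤ (Cu * (max 1 m₀⁻¹) ^ (2 * r) * (2 * s₁) ^ r + 1) *
          ((r.factorial : ℝ) * D ^ r * ξx ^ r * (ξx ^ a * ex)) :=
        mul_le_mul_of_nonneg_right (by linarith) hbig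
    _ = (r.factorial : ℝ) * (Cu * (max 1 m₀⁻¹) ^ (2 * r) * (2 * s₁) ^ r + 1) * D ^ r *
          (ξx ^ a * ξx ^ r) * ex := by ring
end

section
/- Set m := (e^{12λM} − e^{11λM})/(e^{12λM} − e^{10λM}) ∈ (0,1). Let p ∈ ℕ, σ > 0, and set s₁ := σ(T⁵ + T¹⁰). For every K ∈ (0,1) with K < m there exists a constant C_K > 0, depending only on K, p, σ, λ and η⁰ (but not on T), such that for all T > 0 and all (t,x) ∈ Q_T one has e^{2 K s₁ α*(t)} ≤ C_K ξ(t,x)^{−(2p+7)} e^{2 s₁ α(t,x)}. -/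
open Real Set Filter Topology

lemma exp_pow_aux {z : ℝ} (hz : 0 ≤ z) (N : ℕ) :
    z ^ N * Real.exp (-z) ≤ (Nat.factorial N : ℝ) := by
  have h1 : z ^ N / (Nat.factorial N : ℝ) ≤ Real.exp z := by
    refine le_trans ?_ (Real.sum_le_exp_of_nonneg hz (N + 1))
    exact Finset.single_le_sum (f := fun i => z ^ i / (Nat.factorial i : ℝ))
      (fun i _ => by positivity) (Finset.self_mem_range_succ N)
  have hfac : (0:ℝ) < (Nat.factorial N : ℝ) := by positivity
  rw [div_le_iff₀ hfac] at h1
  have h2 : Real.exp z * Real.exp (-z) = 1 := by rw [← Real.exp_add]; simp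
  nlinarith [Real.exp_pos (-z), pow_nonneg hz N]

lemma main_aux {A E11 E10 B K σ s D : ℝ} (q : ℕ)
    (h10 : 0 < E10) (h1110 : E10 < E11) (h1211 : E11 < A)
    (hB1 : E10 ≤ B) (hB2 : B ≤ E11)
    (hKm : K < (A - E11) / (A - E10))
    (hσ : 0 < σ) (hD : 0 < D) (hs : 0 < s) (hsD : 1024 * D ≤ s ^ 2) :
    Real.exp (2 * K * (σ * s) * ((A - E10) / D)) ≤
      (E11 ^ q * (Nat.factorial (2 * q) : ℝ) /
          (1024 * (2 * σ * (((A - E11) / (A - E10) - K) * (A - E10))) ^ 2) ^ q) *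
        ((B / D) ^ q)⁻¹ * Real.exp (2 * (σ * s) * ((A - B) / D)) := by
  have hA10 : 0 < A - E10 := by linarith
  set m : ℝ := (A - E11) / (A - E10) with hm
  have hmE : m * (A - E10) = A - E11 := div_mul_cancel₀ _ (ne_of_gt hA10)
  have hmK : 0 < m - K := sub_pos.mpr hKm
  set a : ℝ := 2 * σ * ((m - K) * (A - E10)) with ha
  have hapos : 0 < a := by positivity
  set z : ℝ := a * s / D with hz
  have hzpos : 0 < z := by positivity
  -- exponent inequality
  have key : 2 * K * (σ * s) * ((A - E10) / D) ≤ 2 * (σ * s) * ((A - B) / D) - z := by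
    rw [hz, ha]
    have h1 : (0:ℝ) < 1 / D := by positivity
    have e1 : 2 * K * (σ * s) * ((A - E10) / D) = (2 * K * σ * s * (A - E10)) * (1 / D) := by
      ring
    have e2 : 2 * (σ * s) * ((A - B) / D) = (2 * σ * s * (A - B)) * (1 / D) := by ring
    have e3 : 2 * σ * ((m - K) * (A - E10)) * s / D
        = (2 * σ * ((m - K) * (A - E10)) * s) * (1 / D) := by ring
    rw [e1, e2, e3, ← sub_mul]
    apply mul_le_mul_of_nonneg_right _ h1.le
    have h4 : 2 * σ * s * (m * (A - E10)) = 2 * σ * s * (A - E11) := by rw [hmE]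
    have h5 : 2 * σ * s * (A - E11) ≤ 2 * σ * s * (A - B) := by
      nlinarith [mul_nonneg (mul_nonneg (by linarith : (0:ℝ) ≤ 2 * σ) hs.le)
        (sub_nonneg.mpr hB2)]
    nlinarith [h4, h5]
  refine le_trans (Real.exp_le_exp.mpr key) ?_
  rw [sub_eq_add_neg, Real.exp_add, mul_comm (Real.exp _) (Real.exp (-z))]
  have hBpos : 0 < B := lt_of_lt_of_le h10 hB1
  have hE11pos : 0 < E11 := h10.trans h1110
  have hBD : 0 < (B / D) ^ q := pow_pos (div_pos hBpos hD) q
  have main : (B / D) ^ q * Real.exp (-z) ≤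
      E11 ^ q * (Nat.factorial (2 * q) : ℝ) / (1024 * a ^ 2) ^ q := by
    have hza : z / a = s / D := by rw [hz]; field_simp
    have hDle : 1 / D ≤ (z / a) ^ 2 / 1024 := by
      rw [hza, div_pow, div_div, div_le_div_iff₀ hD (by positivity)]
      nlinarith [hsD, hD]
    have step1 : (B / D) ^ q ≤ (E11 / D) ^ q :=
      pow_le_pow_left₀ (div_pos hBpos hD).le (by gcongr) q
    have e4 : (E11 / D) ^ q = E11 ^ q * (1 / D) ^ q := by
      rw [← mul_pow, mul_one_div]
    have e5 : ((z / a) ^ 2 / 1024) ^ q = z ^ (2 * q) / (1024 * a ^ 2) ^ q := by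
      rw [div_pow z a, div_div, div_pow, ← pow_mul, mul_comm (a ^ 2) 1024]
    have step2 : (E11 / D) ^ q ≤ E11 ^ q * (z ^ (2 * q) / (1024 * a ^ 2) ^ q) := by
      rw [e4, ← e5]
      exact mul_le_mul_of_nonneg_left (pow_le_pow_left₀ (by positivity) hDle q)
        (pow_nonneg hE11pos.le q)
    calc (B / D) ^ q * Real.exp (-z) ≤ (E11 / D) ^ q * Real.exp (-z) := by
          exact mul_le_mul_of_nonneg_right step1 (Real.exp_pos _).le
      _ ≤ E11 ^ q * (z ^ (2 * q) / (1024 * a ^ 2) ^ q) * Real.exp (-z) := by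
          exact mul_le_mul_of_nonneg_right step2 (Real.exp_pos _).le
      _ = E11 ^ q / (1024 * a ^ 2) ^ q * (z ^ (2 * q) * Real.exp (-z)) := by ring
      _ ≤ E11 ^ q / (1024 * a ^ 2) ^ q * (Nat.factorial (2 * q) : ℝ) := by
          exact mul_le_mul_of_nonneg_left (exp_pow_aux hzpos.le (2 * q))
            (div_nonneg (pow_nonneg hE11pos.le q) (pow_nonneg (by positivity) q))
      _ = E11 ^ q * (Nat.factorial (2 * q) : ℝ) / (1024 * a ^ 2) ^ q := by ring
  apply mul_le_mul_of_nonneg_right _ (Real.exp_pos _).le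
  rw [mul_comm] at main
  rw [← le_div_iff₀ hBD] at main
  calc Real.exp (-z) ≤ E11 ^ q * (Nat.factorial (2 * q) : ℝ) / (1024 * a ^ 2) ^ q / (B / D) ^ q :=
        main
    _ = E11 ^ q * (Nat.factorial (2 * q) : ℝ) / (1024 * a ^ 2) ^ q * ((B / D) ^ q)⁻¹ := by
        rw [div_eq_mul_inv]

/-- set `m := (e^{12λM} − e^{11λM})/(e^{12λM} − e^{10λM})`.  Let `p ∈ ℕ`,
`σ > 0`, `s₁ := σ(T⁵+T¹⁰)`.  For every `K ∈ (0,1)` with `K < m` there is `C_K > 0`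
(depending only on `K`, `p`, `σ`, `λ`, `η⁰`, not on `T`) such that for all `T > 0` and
`(t,x) ∈ Q_T`, `e^{2Ks₁α*(t)} ≤ C_K ξ(t,x)^{−(2p+7)} e^{2s₁α(t,x)}`, where
`α*(t) = max_{x ∈ cl Ω} α(t,x)`. -/
theorem stmt_7 {n : ℕ}
    (Ω : Set (EuclideanSpace ℝ (Fin n))) (hne : Ω.Nonempty) (hop : IsOpen Ω)
    (hbd : Bornology.IsBounded Ω)
    (lam : ℝ) (hlam : 0 < lam)
    (η : EuclideanSpace ℝ (Fin n) → ℝ)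
    (hηc : ContinuousOn η (closure Ω))
    (hηpos : ∀ x ∈ Ω, 0 < η x)
    (hηfr : ∀ x ∈ frontier Ω, η x = 0)
    (M : ℝ) (hM : IsGreatest (η '' closure Ω) M) (hMpos : 0 < M)
    (p : ℕ) (σ : ℝ) (hσ : 0 < σ) :
    ∀ K ∈ Ioo (0 : ℝ) 1,
      K < (Real.exp (12 * lam * M) - Real.exp (11 * lam * M)) /
            (Real.exp (12 * lam * M) - Real.exp (10 * lam * M)) →
      ∃ C : ℝ, 0 < C ∧
        ∀ T : ℝ, 0 < T → ∀ t ∈ Ioo (0 : ℝ) T, ∀ x ∈ Ω,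
          Real.exp (2 * K * (σ * (T ^ 5 + T ^ 10)) *
              sSup ((carlemanAlpha lam M T η t) '' closure Ω))
            ≤ C * carlemanXi lam M T η t x ^ (-(2 * (p : ℝ) + 7)) *
                Real.exp (2 * (σ * (T ^ 5 + T ^ 10)) * carlemanAlpha lam M T η t x) := by
  intro K hK hKm
  obtain ⟨hK0, hK1⟩ := hK
  have hlM : 0 < lam * M := mul_pos hlam hMpos
  have h10pos : 0 < Real.exp (10 * lam * M) := Real.exp_pos _
  have h1110 : Real.exp (10 * lam * M) < Real.exp (11 * lam * M) :=
    Real.exp_lt_exp.mpr (by nlinarith)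
  have h1211 : Real.exp (11 * lam * M) < Real.exp (12 * lam * M) :=
    Real.exp_lt_exp.mpr (by nlinarith)
  have hA10 : 0 < Real.exp (12 * lam * M) - Real.exp (10 * lam * M) := by linarith
  have hmK : 0 < (Real.exp (12 * lam * M) - Real.exp (11 * lam * M)) /
      (Real.exp (12 * lam * M) - Real.exp (10 * lam * M)) - K := sub_pos.mpr hKm
  set a : ℝ := 2 * σ * (((Real.exp (12 * lam * M) - Real.exp (11 * lam * M)) /
      (Real.exp (12 * lam * M) - Real.exp (10 * lam * M)) - K) *
      (Real.exp (12 * lam * M) - Real.exp (10 * lam * M))) with ha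
  have hapos : 0 < a := by positivity
  refine ⟨Real.exp (11 * lam * M) ^ (2 * p + 7) * (Nat.factorial (2 * (2 * p + 7)) : ℝ) /
      (1024 * a ^ 2) ^ (2 * p + 7), by positivity, ?_⟩
  intro T hT t ht x hx
  obtain ⟨ht0, htT⟩ := ht
  have hTt : 0 < T - t := sub_pos.mpr htT
  have hD : 0 < t ^ 5 * (T - t) ^ 5 := by positivity
  have hs : 0 < T ^ 5 + T ^ 10 := by positivity
  -- η is nonnegative on the closure
  have hcl : ∀ y ∈ closure Ω, 0 ≤ η y := by
    intro y hy
    by_cases h : y ∈ Ω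
    · exact (hηpos y h).le
    · have hyfr : y ∈ frontier Ω := by
        rw [frontier, hop.interior_eq]
        exact ⟨hy, h⟩
      exact le_of_eq (hηfr y hyfr).symm
  have hxcl : x ∈ closure Ω := subset_closure hx
  have hηxM : η x ≤ M := hM.2 ⟨x, hxcl, rfl⟩
  have hB1 : Real.exp (10 * lam * M) ≤ Real.exp (lam * (10 * M + η x)) :=
    Real.exp_le_exp.mpr (by nlinarith [hcl x hxcl])
  have hB2 : Real.exp (lam * (10 * M + η x)) ≤ Real.exp (11 * lam * M) :=
    Real.exp_le_exp.mpr (by nlinarith)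
  -- bound for the supremum
  have hsup : sSup ((carlemanAlpha lam M T η t) '' closure Ω) ≤
      (Real.exp (12 * lam * M) - Real.exp (10 * lam * M)) / (t ^ 5 * (T - t) ^ 5) := by
    apply Real.sSup_le
    · rintro _ ⟨y, hy, rfl⟩
      show (Real.exp (12 * lam * M) - Real.exp (lam * (10 * M + η y))) / (t ^ 5 * (T - t) ^ 5)
        ≤ _
      apply (div_le_div_iff_of_pos_right hD).mpr
      have hy10 : Real.exp (10 * lam * M) ≤ Real.exp (lam * (10 * M + η y)) :=
        Real.exp_le_exp.mpr (by nlinarith [hcl y hy])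
      linarith
    · exact div_nonneg hA10.le hD.le
  have hLHS : Real.exp (2 * K * (σ * (T ^ 5 + T ^ 10)) *
      sSup ((carlemanAlpha lam M T η t) '' closure Ω)) ≤
      Real.exp (2 * K * (σ * (T ^ 5 + T ^ 10)) *
        ((Real.exp (12 * lam * M) - Real.exp (10 * lam * M)) / (t ^ 5 * (T - t) ^ 5))) :=
    Real.exp_le_exp.mpr (mul_le_mul_of_nonneg_left hsup
      (by have := hK0; positivity))
  refine hLHS.trans ?_
  have hrpow : carlemanXi lam M T η t x ^ (-(2 * (p : ℝ) + 7)) =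
      ((Real.exp (lam * (10 * M + η x)) / (t ^ 5 * (T - t) ^ 5)) ^ (2 * p + 7 : ℕ))⁻¹ := by
    have hxipos : (0:ℝ) < Real.exp (lam * (10 * M + η x)) / (t ^ 5 * (T - t) ^ 5) := by
      positivity
    rw [show carlemanXi lam M T η t x =
        Real.exp (lam * (10 * M + η x)) / (t ^ 5 * (T - t) ^ 5) from rfl,
      show (-(2 * (p : ℝ) + 7)) = -((2 * p + 7 : ℕ) : ℝ) by push_cast; ring,
      Real.rpow_neg hxipos.le, Real.rpow_natCast]
  rw [hrpow, show carlemanAlpha lam M T η t x =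
      (Real.exp (12 * lam * M) - Real.exp (lam * (10 * M + η x))) / (t ^ 5 * (T - t) ^ 5)
      from rfl]
  have hsD : 1024 * (t ^ 5 * (T - t) ^ 5) ≤ (T ^ 5 + T ^ 10) ^ 2 := by
    have h1 : t * (T - t) ≤ T ^ 2 / 4 := by nlinarith [sq_nonneg (T - 2 * t)]
    have h2 : (0:ℝ) ≤ t * (T - t) := by positivity
    calc 1024 * (t ^ 5 * (T - t) ^ 5) = 1024 * (t * (T - t)) ^ 5 := by ring
      _ ≤ 1024 * (T ^ 2 / 4) ^ 5 := by gcongr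
      _ = T ^ 10 := by ring
      _ ≤ (T ^ 5 + T ^ 10) ^ 2 := by nlinarith [pow_nonneg hT.le 15, pow_nonneg hT.le 20]
  exact main_aux (2 * p + 7) h10pos h1110 h1211 hB1 hB2 hKm hσ hD hs hsD
end

section
/- For every p ∈ ℕ there exists a constant C > 0, depending only on p, λ and M, such that for all T > 0, all s ≥ C(T⁵ + T¹⁰), and all x ∈ cl(Ω), the minimum over t ∈ [T/4, 3T/4] of the function t ↦ e^{−2 s α(t,x)} ξ(t,x)^{2p+7} is attained at the endpoints t = T/4 and t = 3T/4, and the values at these two endpoints are equal. -/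
open Real Set Filter Topology

lemma key_mono (c : ℝ) (k : ℕ) (u v : ℝ) (hu : 0 < u) (huv : u ≤ v)
    (hc : (k : ℝ) ≤ c * u) :
    Real.exp (-(c * v)) * v ^ k ≤ Real.exp (-(c * u)) * u ^ k := by
  have hv : 0 < v := hu.trans_le huv
  have h1 : v / u ≤ Real.exp ((v - u) / u) := by
    have h := Real.add_one_le_exp ((v - u) / u)
    have e : (v - u) / u + 1 = v / u := by field_simp; ring
    linarith
  have h2 : (v / u) ^ k ≤ Real.exp ((k : ℝ) * ((v - u) / u)) := by
    calc (v / u) ^ k ≤ (Real.exp ((v - u) / u)) ^ k :=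
          pow_le_pow_left₀ (by positivity) h1 k
    _ = Real.exp ((k : ℝ) * ((v - u) / u)) := by rw [← Real.exp_nat_mul]
  have hk : (k : ℝ) / u ≤ c := (div_le_iff₀ hu).mpr (by linarith [hc])
  have h3 : (k : ℝ) * ((v - u) / u) ≤ c * (v - u) := by
    have e : (k : ℝ) * ((v - u) / u) = ((k : ℝ) / u) * (v - u) := by ring
    rw [e]
    exact mul_le_mul_of_nonneg_right hk (by linarith)
  have h4 : (v / u) ^ k ≤ Real.exp (c * (v - u)) :=
    h2.trans (Real.exp_le_exp.mpr h3)
  have h5 : v ^ k ≤ Real.exp (c * (v - u)) * u ^ k := by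
    rw [div_pow] at h4
    calc v ^ k = (v ^ k / u ^ k) * u ^ k := by field_simp
    _ ≤ _ := mul_le_mul_of_nonneg_right h4 (by positivity)
  calc Real.exp (-(c * v)) * v ^ k
      ≤ Real.exp (-(c * v)) * (Real.exp (c * (v - u)) * u ^ k) :=
        mul_le_mul_of_nonneg_left h5 (Real.exp_pos _).le
  _ = Real.exp (-(c * u)) * u ^ k := by
        rw [← mul_assoc, ← Real.exp_add]; ring_nf

lemma key2 (s A E : ℝ) (k : ℕ) (hE : 0 < E) (D1 D2 : ℝ)
    (hD1 : 0 < D1) (hD2 : 0 < D2) (hle : D2 ≤ D1)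
    (hc : (k : ℝ) ≤ 2 * s * A / D1) :
    Real.exp (-(2 * s * (A / D2))) * (E / D2) ^ k
      ≤ Real.exp (-(2 * s * (A / D1))) * (E / D1) ^ k := by
  have hu : (0:ℝ) < D1⁻¹ := inv_pos.mpr hD1
  have huv : D1⁻¹ ≤ D2⁻¹ := by gcongr
  have hc' : (k : ℝ) ≤ (2 * s * A) * D1⁻¹ := by
    rw [div_eq_mul_inv] at hc; exact hc
  have H := key_mono (2 * s * A) k D1⁻¹ D2⁻¹ hu huv hc'
  have e1 : -(2 * s * (A / D2)) = -(2 * s * A * D2⁻¹) := by rw [div_eq_mul_inv]; ring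
  have e2 : -(2 * s * (A / D1)) = -(2 * s * A * D1⁻¹) := by rw [div_eq_mul_inv]; ring
  rw [e1, e2, div_eq_mul_inv E D1, div_eq_mul_inv E D2, mul_pow, mul_pow]
  calc Real.exp (-(2 * s * A * D2⁻¹)) * (E ^ k * (D2⁻¹) ^ k)
      = E ^ k * (Real.exp (-(2 * s * A * D2⁻¹)) * (D2⁻¹) ^ k) := by ring
  _ ≤ E ^ k * (Real.exp (-(2 * s * A * D1⁻¹)) * (D1⁻¹) ^ k) :=
      mul_le_mul_of_nonneg_left H (by positivity)
  _ = _ := by ring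


set_option maxHeartbeats 800000 in
/-- for every `p ∈ ℕ` there is `C > 0` (depending only on `p`, `λ`, `M`)
such that for all `T > 0`, all `s ≥ C(T⁵+T¹⁰)` and all `x ∈ cl(Ω)`, the minimum over
`t ∈ [T/4, 3T/4]` of `t ↦ e^{−2sα(t,x)} ξ(t,x)^{2p+7}` is attained at the endpoints
`t = T/4` and `t = 3T/4`, and the values at the two endpoints coincide. -/
theorem stmt_9 {n : ℕ}
    (Ω : Set (EuclideanSpace ℝ (Fin n))) (hne : Ω.Nonempty) (hop : IsOpen Ω)
    (hbd : Bornology.IsBounded Ω)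
    (lam : ℝ) (hlam : 0 < lam)
    (η : EuclideanSpace ℝ (Fin n) → ℝ)
    (hηc : ContinuousOn η (closure Ω))
    (hηpos : ∀ x ∈ Ω, 0 < η x)
    (hηfr : ∀ x ∈ frontier Ω, η x = 0)
    (M : ℝ) (hM : IsGreatest (η '' closure Ω) M) (hMpos : 0 < M)
    (p : ℕ) :
    ∃ C : ℝ, 0 < C ∧
      ∀ T : ℝ, 0 < T → ∀ s : ℝ, C * (T ^ 5 + T ^ 10) ≤ s →
        ∀ x ∈ closure Ω,
          (∀ t ∈ Icc (T / 4) (3 * T / 4),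
            Real.exp (-(2 * s * carlemanAlpha lam M T η (T / 4) x)) *
                carlemanXi lam M T η (T / 4) x ^ (2 * p + 7)
              ≤ Real.exp (-(2 * s * carlemanAlpha lam M T η t x)) *
                  carlemanXi lam M T η t x ^ (2 * p + 7)) ∧
          Real.exp (-(2 * s * carlemanAlpha lam M T η (T / 4) x)) *
              carlemanXi lam M T η (T / 4) x ^ (2 * p + 7)
            = Real.exp (-(2 * s * carlemanAlpha lam M T η (3 * T / 4) x)) *
                carlemanXi lam M T η (3 * T / 4) x ^ (2 * p + 7) := by
  have hA0 : (0:ℝ) < Real.exp (12 * lam * M) - Real.exp (11 * lam * M) :=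
    sub_pos.mpr (Real.exp_lt_exp.mpr (by nlinarith))
  set A0 : ℝ := Real.exp (12 * lam * M) - Real.exp (11 * lam * M) with hA0def
  set k : ℕ := 2 * p + 7 with hkdef
  set C : ℝ := ((k : ℝ) + 1) / (2048 * A0) with hCdef
  have hCpos : 0 < C := by positivity
  refine ⟨C, hCpos, ?_⟩
  intro T hT s hs x hx
  have hηx : η x ≤ M := hM.2 ⟨x, hx, rfl⟩
  set E : ℝ := Real.exp (lam * (10 * M + η x)) with hEdef
  set A : ℝ := Real.exp (12 * lam * M) - E with hAdef
  have hAx : A0 ≤ A := by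
    have : Real.exp (lam * (10 * M + η x)) ≤ Real.exp (11 * lam * M) :=
      Real.exp_le_exp.mpr (by nlinarith)
    simp only [hA0def, hAdef, hEdef]
    linarith
  have hApos : 0 < A := lt_of_lt_of_le hA0 hAx
  have hsC : C * T ^ 10 ≤ s := by
    have h5 : (0:ℝ) < T ^ 5 := pow_pos hT 5
    nlinarith
  have hspos : 0 < s := lt_of_lt_of_le (by positivity) hsC
  -- endpoint equality
  have heq : (T / 4) ^ 5 * (T - T / 4) ^ 5 = (3 * T / 4) ^ 5 * (T - 3 * T / 4) ^ 5 := by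
    ring
  constructor
  · intro t ht
    obtain ⟨ht1, ht2⟩ := ht
    set D1 : ℝ := t ^ 5 * (T - t) ^ 5 with hD1def
    set D2 : ℝ := (T / 4) ^ 5 * (T - T / 4) ^ 5 with hD2def
    have hD1eq : D1 = (t * (T - t)) ^ 5 := by rw [hD1def, mul_pow]
    have hD2eq : D2 = (T / 4 * (T - T / 4)) ^ 5 := by rw [hD2def, mul_pow]
    have hlow : 3 * T ^ 2 / 16 ≤ t * (T - t) := by
      nlinarith [mul_nonneg (by linarith : (0:ℝ) ≤ t - T / 4)
        (by linarith : (0:ℝ) ≤ 3 * T / 4 - t)]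
    have hhigh : t * (T - t) ≤ T ^ 2 / 4 := by nlinarith [sq_nonneg (t - T / 2)]
    have hq2 : T / 4 * (T - T / 4) = 3 * T ^ 2 / 16 := by ring
    have h316 : (0:ℝ) < 3 * T ^ 2 / 16 := by positivity
    have hD2pos : 0 < D2 := by rw [hD2eq, hq2]; positivity
    have hD1pos : 0 < D1 := by
      rw [hD1eq]; exact pow_pos (lt_of_lt_of_le h316 hlow) 5
    have hle : D2 ≤ D1 := by
      rw [hD1eq, hD2eq, hq2]
      exact pow_le_pow_left₀ h316.le hlow 5
    have hDup : D1 ≤ T ^ 10 / 1024 := by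
      have h1 : D1 ≤ (T ^ 2 / 4) ^ 5 := by
        rw [hD1eq]
        exact pow_le_pow_left₀ (le_trans h316.le hlow) hhigh 5
      have h2 : (T ^ 2 / 4 : ℝ) ^ 5 = T ^ 10 / 1024 := by ring
      linarith [h1, h2.le]
    have hc : (k : ℝ) ≤ 2 * s * A / D1 := by
      rw [le_div_iff₀ hD1pos]
      have hTk : (0:ℝ) < T ^ 10 / 1024 := by positivity
      have step1 : (k : ℝ) * D1 ≤ (k : ℝ) * (T ^ 10 / 1024) :=
        mul_le_mul_of_nonneg_left hDup (by positivity)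
      have step2 : (k : ℝ) * (T ^ 10 / 1024) ≤ ((k : ℝ) + 1) * (T ^ 10 / 1024) := by
        nlinarith
      have hCA : C * (2048 * A0) = (k : ℝ) + 1 := div_mul_cancel₀ _ (by positivity)
      have step3 : ((k : ℝ) + 1) * (T ^ 10 / 1024) = 2 * (C * T ^ 10) * A0 := by
        linear_combination (-(T ^ 10) / 1024) * hCA
      have step4 : 2 * (C * T ^ 10) * A0 ≤ 2 * s * A := by
        have h1 : 2 * (C * T ^ 10) ≤ 2 * s := by linarith
        exact mul_le_mul h1 hAx hA0.le (by linarith)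
      calc (k : ℝ) * D1 ≤ (k : ℝ) * (T ^ 10 / 1024) := step1
      _ ≤ ((k : ℝ) + 1) * (T ^ 10 / 1024) := step2
      _ = 2 * (C * T ^ 10) * A0 := step3
      _ ≤ 2 * s * A := step4
    exact key2 s A E k (Real.exp_pos _) D1 D2 hD1pos hD2pos hle hc
  · simp only [carlemanAlpha, carlemanXi, heq]
end

section
/- For every p ∈ ℕ there exists a constant C > 0, depending only on p, λ and η⁰, such that for all T > 0, all s ≥ C(T⁵ + T¹⁰), all t ∈ [T/4, 3T/4] and all x ∈ cl(Ω), one has the lower bound e^{−2 s α(t,x)} ξ(t,x)^{2p+7} ≥ C^{−1} T^{−10(2p+7)} e^{−C s / T^{10}}. -/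
open Real Set Filter Topology

/-- for every `p ∈ ℕ` there is `C > 0` (depending only on `p`, `λ`, `η⁰`)
such that for all `T > 0`, all `s ≥ C(T⁵+T¹⁰)`, all `t ∈ [T/4, 3T/4]` and all
`x ∈ cl(Ω)`, `e^{−2sα(t,x)} ξ(t,x)^{2p+7} ≥ C⁻¹ T^{−10(2p+7)} e^{−Cs/T¹⁰}`. -/
theorem stmt_10 {n : ℕ}
    (Ω : Set (EuclideanSpace ℝ (Fin n))) (hne : Ω.Nonempty) (hop : IsOpen Ω)
    (hbd : Bornology.IsBounded Ω)
    (lam : ℝ) (hlam : 0 < lam)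
    (η : EuclideanSpace ℝ (Fin n) → ℝ)
    (hηc : ContinuousOn η (closure Ω))
    (hηpos : ∀ x ∈ Ω, 0 < η x)
    (hηfr : ∀ x ∈ frontier Ω, η x = 0)
    (M : ℝ) (hM : IsGreatest (η '' closure Ω) M) (hMpos : 0 < M)
    (p : ℕ) :
    ∃ C : ℝ, 0 < C ∧
      ∀ T : ℝ, 0 < T → ∀ s : ℝ, C * (T ^ 5 + T ^ 10) ≤ s →
        ∀ t ∈ Icc (T / 4) (3 * T / 4), ∀ x ∈ closure Ω,
          C⁻¹ * T ^ (-(10 * (2 * (p : ℝ) + 7))) * Real.exp (-(C * s / T ^ 10))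
            ≤ Real.exp (-(2 * s * carlemanAlpha lam M T η t x)) *
                carlemanXi lam M T η t x ^ (2 * p + 7) := by

  classical
  set m : ℕ := 2 * p + 7 with hm
  set c : ℝ := Real.exp (10 * lam * M) * (4 / 3) ^ 10 with hc
  have hcpos : 0 < c := by positivity
  set A : ℝ := 2 * Real.exp (12 * lam * M) * 4 ^ 10 with hA
  have hApos : 0 < A := by positivity
  refine ⟨max A (c⁻¹ ^ m), lt_max_of_lt_left hApos, ?_⟩
  set C : ℝ := max A (c⁻¹ ^ m) with hCdef
  have hCpos : 0 < C := lt_max_of_lt_left hApos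
  intro T hT s hs t ht x hx
  obtain ⟨ht1, ht2⟩ := ht
  have htpos : 0 < t := lt_of_lt_of_le (by linarith) ht1
  have hTt : T / 4 ≤ T - t := by linarith
  have hTtpos : 0 < T - t := lt_of_lt_of_le (by linarith) hTt
  have hT10 : 0 < T ^ 10 := by positivity
  have hs0 : 0 ≤ s := le_trans (by positivity) hs
  have hDpos : 0 < t ^ 5 * (T - t) ^ 5 := by positivity
  have hDlow : T ^ 10 / 4 ^ 10 ≤ t ^ 5 * (T - t) ^ 5 := by
    have h1 : (T / 4) ^ 5 ≤ t ^ 5 := pow_le_pow_left₀ (by linarith) ht1 5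
    have h2 : (T / 4) ^ 5 ≤ (T - t) ^ 5 := pow_le_pow_left₀ (by linarith) hTt 5
    calc T ^ 10 / 4 ^ 10 = (T / 4) ^ 5 * (T / 4) ^ 5 := by ring
      _ ≤ t ^ 5 * (T - t) ^ 5 := mul_le_mul h1 h2 (by positivity) (by positivity)
  have hDup : t ^ 5 * (T - t) ^ 5 ≤ (3 / 4) ^ 10 * T ^ 10 := by
    have h1 : t ^ 5 ≤ (3 * T / 4) ^ 5 := pow_le_pow_left₀ htpos.le ht2 5
    have h2 : (T - t) ^ 5 ≤ (3 * T / 4) ^ 5 := pow_le_pow_left₀ hTtpos.le (by linarith) 5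
    calc t ^ 5 * (T - t) ^ 5 ≤ (3 * T / 4) ^ 5 * (3 * T / 4) ^ 5 :=
          mul_le_mul h1 h2 (by positivity) (by positivity)
      _ = (3 / 4) ^ 10 * T ^ 10 := by ring
  have hη1 : η x ≤ M := hM.2 ⟨x, hx, rfl⟩
  have hη0 : 0 ≤ η x := by
    by_cases hxΩ : x ∈ Ω
    · exact (hηpos x hxΩ).le
    · have hfr : x ∈ frontier Ω := by
        rw [hop.frontier_eq]; exact ⟨hx, hxΩ⟩
      simp [hηfr x hfr]
  have hξ : c / T ^ 10 ≤ carlemanXi lam M T η t x := by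
    rw [carlemanXi]
    calc c / T ^ 10 = Real.exp (10 * lam * M) / ((3 / 4) ^ 10 * T ^ 10) := by
          rw [hc]; field_simp
      _ ≤ Real.exp (lam * (10 * M + η x)) / (t ^ 5 * (T - t) ^ 5) := by
          apply div_le_div₀ (Real.exp_pos _).le _ hDpos hDup
          exact Real.exp_le_exp.mpr (by nlinarith)
  have hξ0 : 0 ≤ carlemanXi lam M T η t x := le_trans (by positivity) hξ
  have hα : 2 * s * carlemanAlpha lam M T η t x ≤ C * s / T ^ 10 := by
    have h3 : carlemanAlpha lam M T η t x ≤ A / 2 / T ^ 10 := by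
      rw [carlemanAlpha]
      calc (Real.exp (12 * lam * M) - Real.exp (lam * (10 * M + η x))) / (t ^ 5 * (T - t) ^ 5)
          ≤ Real.exp (12 * lam * M) / (t ^ 5 * (T - t) ^ 5) := by
            gcongr
            linarith [Real.exp_pos (lam * (10 * M + η x))]
        _ ≤ Real.exp (12 * lam * M) / (T ^ 10 / 4 ^ 10) := by
            apply div_le_div_of_nonneg_left (Real.exp_pos _).le (by positivity) hDlow
        _ = A / 2 / T ^ 10 := by rw [hA]; field_simp
    have h4 : A ≤ C := le_max_left _ _
    calc 2 * s * carlemanAlpha lam M T η t x ≤ 2 * s * (A / 2 / T ^ 10) := by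
          apply mul_le_mul_of_nonneg_left h3 (by positivity)
      _ = A * s / T ^ 10 := by ring
      _ ≤ C * s / T ^ 10 := by gcongr
  have hCm : C⁻¹ ≤ c ^ m := by
    rw [inv_le_comm₀ hCpos (by positivity)]
    calc (c ^ m)⁻¹ = c⁻¹ ^ m := (inv_pow c m).symm
      _ ≤ C := le_max_right _ _
  have hrpow : T ^ (-(10 * (2 * (p : ℝ) + 7))) = (T ^ (10 * m)) ⁻¹ := by
    rw [show (-(10 * (2 * (p : ℝ) + 7))) = (-(((10 * m : ℕ) : ℝ))) by rw [hm]; push_cast; ring,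
      Real.rpow_neg hT.le, Real.rpow_natCast]
  calc C⁻¹ * T ^ (-(10 * (2 * (p : ℝ) + 7))) * Real.exp (-(C * s / T ^ 10))
      = (C⁻¹ * (T ^ (10 * m))⁻¹) * Real.exp (-(C * s / T ^ 10)) := by rw [hrpow]
    _ ≤ (carlemanXi lam M T η t x ^ m) *
          Real.exp (-(2 * s * carlemanAlpha lam M T η t x)) := by
        apply mul_le_mul ?_ (Real.exp_le_exp.mpr (neg_le_neg hα)) (Real.exp_pos _).le
          (by positivity)
        calc C⁻¹ * (T ^ (10 * m))⁻¹ ≤ c ^ m * (T ^ (10 * m))⁻¹ := by gcongr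
          _ = (c / T ^ 10) ^ m := by rw [div_pow, pow_mul, div_eq_mul_inv]
          _ ≤ carlemanXi lam M T η t x ^ m := pow_le_pow_left₀ (by positivity) hξ m
    _ = Real.exp (-(2 * s * carlemanAlpha lam M T η t x)) *
          carlemanXi lam M T η t x ^ m := mul_comm _ _
end

section
/- For every p ∈ ℕ and λ > 0 there exists σ₀ > 0, depending only on p, λ and η⁰, such that for every T > 0 and every s₁ ≥ σ₀(T⁵ + T¹⁰), the weight ρ := e^{−2 s₁ α} ξ^{2p+7} satisfies ρ(t,x) ≤ 1 for all (t,x) ∈ Q_T. -/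
open Real Set Filter Topology

set_option maxHeartbeats 1000000 in
/-- for every `p ∈ ℕ` and `λ > 0` there is `σ₀ > 0` (depending only on
`p`, `λ`, `η⁰`) such that for every `T > 0` and every `s₁ ≥ σ₀(T⁵+T¹⁰)`, the weight
`ρ := e^{−2s₁α} ξ^{2p+7}` satisfies `ρ(t,x) ≤ 1` for all `(t,x) ∈ Q_T`. -/
theorem stmt_11 {n : ℕ}
    (Ω : Set (EuclideanSpace ℝ (Fin n))) (hne : Ω.Nonempty) (hop : IsOpen Ω)
    (hbd : Bornology.IsBounded Ω)
    (lam : ℝ) (hlam : 0 < lam)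
    (η : EuclideanSpace ℝ (Fin n) → ℝ)
    (hηc : ContinuousOn η (closure Ω))
    (hηpos : ∀ x ∈ Ω, 0 < η x)
    (hηfr : ∀ x ∈ frontier Ω, η x = 0)
    (M : ℝ) (hM : IsGreatest (η '' closure Ω) M) (hMpos : 0 < M)
    (p : ℕ) :
    ∃ σ₀ : ℝ, 0 < σ₀ ∧
      ∀ T : ℝ, 0 < T → ∀ s₁ : ℝ, σ₀ * (T ^ 5 + T ^ 10) ≤ s₁ →
        ∀ t ∈ Ioo (0 : ℝ) T, ∀ x ∈ Ω,
          Real.exp (-(2 * s₁ * carlemanAlpha lam M T η t x)) *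
              carlemanXi lam M T η t x ^ (2 * p + 7) ≤ 1 := by
  have hδ : (0:ℝ) < Real.exp (12*lam*M) - Real.exp (11*lam*M) := by
    have h : (11:ℝ)*lam*M < 12*lam*M := by nlinarith
    have := Real.exp_lt_exp.2 h
    linarith
  set δ : ℝ := Real.exp (12*lam*M) - Real.exp (11*lam*M) with hδdef
  set K : ℝ := (2*(p:ℝ)+7) with hKdef
  have hK : (0:ℝ) < K := by positivity
  have hlM : (0:ℝ) < lam*M := mul_pos hlam hMpos
  refine ⟨(11*K*(lam*M) + K + 1)/δ, by positivity, ?_⟩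
  set σ₀ : ℝ := (11*K*(lam*M) + K + 1)/δ with hσdef
  have hσδ : σ₀*δ = 11*K*(lam*M) + K + 1 := by
    rw [hσdef, div_mul_cancel₀ _ hδ.ne']
  have hσ0 : 0 < σ₀ := by positivity
  intro T hT s₁ hs₁ t ht x hx
  obtain ⟨ht0, htT⟩ := ht
  have htT' : 0 < T - t := sub_pos.2 htT
  have hηM : η x ≤ M := hM.2 ⟨x, subset_closure hx, rfl⟩
  set g : ℝ := t^5*(T-t)^5 with hgdef
  have hg : 0 < g := by positivity
  set r : ℝ := Real.sqrt g with hrdef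
  have hr : 0 < r := Real.sqrt_pos.2 hg
  have hr2 : r^2 = g := Real.sq_sqrt hg.le
  have hrT : r ≤ T^5/32 := by
    have h1 : t*(T-t) ≤ T^2/4 := by nlinarith [sq_nonneg (T - 2*t)]
    have h2 : g ≤ (T^5/32)^2 := by
      have hge : g = (t*(T-t))^5 := by rw [hgdef]; ring
      have h3 : (t*(T-t))^5 ≤ (T^2/4)^5 :=
        pow_le_pow_left₀ (mul_nonneg ht0.le htT'.le) h1 5
      have h4 : (T^2/4)^5 = (T^5/32)^2 := by ring
      rw [hge]; rw [← h4] at *; linarith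
    calc r ≤ Real.sqrt ((T^5/32)^2) := Real.sqrt_le_sqrt h2
      _ = T^5/32 := Real.sqrt_sq (by positivity)
  -- log bound : -log g ≤ 2/r
  have hloggr : -Real.log g ≤ 2/r := by
    have h := Real.log_le_sub_one_of_pos (show (0:ℝ) < 1/r by positivity)
    rw [Real.log_div one_ne_zero hr.ne', Real.log_one] at h
    have hlg : Real.log g = 2 * Real.log r := by
      rw [← hr2, Real.log_pow]; push_cast; ring
    have h1r : (0:ℝ) < 1/r := by positivity
    have : 1/r = 2/r - 1/r := by ring
    rw [hlg]
    have h2r : 2/r = 2*(1/r) := by ring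
    linarith
  set E : ℝ := Real.exp (lam*(10*M+η x)) with hEdef
  have hE : 0 < E := Real.exp_pos _
  set c : ℝ := Real.exp (12*lam*M) - E with hcdef
  have hcδ : δ ≤ c := by
    have h : lam*(10*M+η x) ≤ 11*lam*M := by nlinarith
    have := Real.exp_le_exp.2 h
    simp only [hcdef, hδdef, hEdef]
    linarith
  have hc : 0 < c := lt_of_lt_of_le hδ hcδ
  -- the key inequality on logarithms
  have hmain : K * Real.log (E/g) ≤ 2*s₁*(c/g) := by
    have hlogX : Real.log (E/g) = lam*(10*M+η x) - Real.log g := by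
      rw [Real.log_div hE.ne' hg.ne', hEdef, Real.log_exp]
    rw [hlogX]
    have step1 : K * (lam*(10*M+η x) - Real.log g) ≤ K*(11*(lam*M)) + K*(2/r) := by
      have h1a : lam*(10*M+η x) ≤ 11*(lam*M) := by nlinarith
      have h1 : lam*(10*M+η x) - Real.log g ≤ 11*(lam*M) + 2/r := by linarith
      calc K * (lam*(10*M+η x) - Real.log g) ≤ K * (11*(lam*M) + 2/r) :=
            mul_le_mul_of_nonneg_left h1 hK.le
        _ = K*(11*(lam*M)) + K*(2/r) := by ring
    have step2 : K*(11*(lam*M)) + K*(2/r) = ((K*(11*(lam*M)))*g + 2*K*r)/g := by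
      rw [← hr2]; field_simp
    have hnum : (K*(11*(lam*M)))*g + 2*K*r ≤ 2*(σ₀*(T^5+T^10))*δ := by
      have hrhs : 2*(σ₀*(T^5+T^10))*δ = 2*(11*K*(lam*M) + K + 1)*(T^5+T^10) := by
        rw [← hσδ]; ring
      rw [hrhs]
      have hT5 : (0:ℝ) < T^5 := by positivity
      have hgle : g ≤ T^10/1024 := by
        have hrr : r*r ≤ (T^5/32)*(T^5/32) :=
          mul_le_mul hrT hrT hr.le (by positivity)
        calc g = r*r := by rw [← hr2]; ring
          _ ≤ (T^5/32)*(T^5/32) := hrr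
          _ = T^10/1024 := by ring
      have hA : K*(11*(lam*M))*g ≤ K*(11*(lam*M))*(T^10/1024) :=
        mul_le_mul_of_nonneg_left hgle (by positivity)
      have hB : 2*K*r ≤ 2*K*(T^5/32) :=
        mul_le_mul_of_nonneg_left hrT (by positivity)
      clear_value K g r σ₀ δ c E
      have n1 : 0 ≤ K*(lam*M)*T^10 := by positivity
      have n2 : 0 ≤ K*(lam*M)*T^5 := by positivity
      have n3 : 0 ≤ K*T^5 := by positivity
      have n4 : 0 ≤ K*T^10 := by positivity
      have n5 : (0:ℝ) ≤ T^5 := by positivity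
      have n6 : (0:ℝ) ≤ T^10 := by positivity
      linarith [hA, hB]
    have step3 : ((K*(11*(lam*M)))*g + 2*K*r)/g ≤ (2*(σ₀*(T^5+T^10))*δ)/g := by
      gcongr
    have step4 : (2*(σ₀*(T^5+T^10))*δ)/g ≤ 2*s₁*(c/g) := by
      rw [div_le_iff₀ hg]
      have hgg : 2*s₁*(c/g)*g = 2*s₁*c := by field_simp
      rw [hgg]
      have hs₁0 : 0 ≤ σ₀*(T^5+T^10) := by positivity
      have := mul_le_mul hs₁ hcδ hδ.le (le_trans hs₁0 hs₁)
      linarith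
    calc K * (lam*(10*M+η x) - Real.log g) ≤ K*(11*(lam*M)) + K*(2/r) := step1
      _ = ((K*(11*(lam*M)))*g + 2*K*r)/g := step2
      _ ≤ (2*(σ₀*(T^5+T^10))*δ)/g := step3
      _ ≤ 2*s₁*(c/g) := step4
  -- conclude
  have hX : (0:ℝ) < E/g := by positivity
  have hα : carlemanAlpha lam M T η t x = c/g := rfl
  have hξ : carlemanXi lam M T η t x = E/g := rfl
  rw [hα, hξ]
  have hpow : (E/g)^(2*p+7) = Real.exp ((2*(p:ℝ)+7) * Real.log (E/g)) := by
    rw [← Real.exp_log hX, ← Real.exp_nat_mul, Real.exp_log hX]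
    push_cast; ring_nf
  rw [hpow, ← Real.exp_add, Real.exp_le_one_iff]
  have : (2*(p:ℝ)+7) * Real.log (E/g) ≤ 2*s₁*(c/g) := hmain
  linarith
end

section
/- Assume η⁰ and θ are continuously differentiable on an open neighborhood of cl(Ω), where θ : ℝⁿ → ℝ satisfies 0 ≤ θ ≤ 1 on cl(Ω). Then there exists a constant C > 0, depending only on η⁰ and θ (independent of T, s and λ), such that for every λ ≥ C, every T > 0, every s ≥ C(T⁵ + T¹⁰), and every (t,x) ∈ Q_T, one has ‖∇_x( θ(x) e^{−2 s α(t,x)} ξ(t,x)³ )‖ ≤ C s λ e^{−2 s α(t,x)} ξ(t,x)⁴. -/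
open Real Set Filter Topology
set_option maxHeartbeats 1000000

/-- assume `η⁰` and `θ` are `C¹` on an open neighborhood of `cl(Ω)`, with
`0 ≤ θ ≤ 1` on `cl(Ω)`.  There is `C > 0` depending only on `η⁰` and `θ` (independent
of `T`, `s`, `λ`) such that for every `λ ≥ C`, every `T > 0`, every `s ≥ C(T⁵+T¹⁰)` and
every `(t,x) ∈ Q_T`, `‖∇_x(θ e^{−2sα} ξ³)‖ ≤ C s λ e^{−2sα} ξ⁴` at `(t,x)`. -/
theorem stmt_12 {n : ℕ}
    (Ω : Set (EuclideanSpace ℝ (Fin n))) (hne : Ω.Nonempty) (hop : IsOpen Ω)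
    (hbd : Bornology.IsBounded Ω)
    (η θ : EuclideanSpace ℝ (Fin n) → ℝ)
    (hηc : ContinuousOn η (closure Ω))
    (hηpos : ∀ x ∈ Ω, 0 < η x)
    (hηfr : ∀ x ∈ frontier Ω, η x = 0)
    (M : ℝ) (hM : IsGreatest (η '' closure Ω) M) (hMpos : 0 < M)
    (U : Set (EuclideanSpace ℝ (Fin n))) (hU : IsOpen U) (hclU : closure Ω ⊆ U)
    (hη1 : ContDiffOn ℝ 1 η U) (hθ1 : ContDiffOn ℝ 1 θ U)
    (hθ01 : ∀ x ∈ closure Ω, θ x ∈ Icc (0 : ℝ) 1) :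
    ∃ C : ℝ, 0 < C ∧
      ∀ lam : ℝ, C ≤ lam → ∀ T : ℝ, 0 < T → ∀ s : ℝ, C * (T ^ 5 + T ^ 10) ≤ s →
        ∀ t ∈ Ioo (0 : ℝ) T, ∀ x ∈ Ω,
          ‖gradient (fun y => θ y *
              (Real.exp (-(2 * s * carlemanAlpha lam M T η t y)) *
                carlemanXi lam M T η t y ^ 3)) x‖
            ≤ C * s * lam * Real.exp (-(2 * s * carlemanAlpha lam M T η t x)) *
                carlemanXi lam M T η t x ^ 4 := by
  classical
  have hcomp : IsCompact (closure Ω) :=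
    Metric.isCompact_of_isClosed_isBounded isClosed_closure hbd.closure
  have hθf : ContinuousOn (fderiv ℝ θ) (closure Ω) :=
    (hθ1.continuousOn_fderiv_of_isOpen hU le_rfl).mono hclU
  have hηf : ContinuousOn (fderiv ℝ η) (closure Ω) :=
    (hη1.continuousOn_fderiv_of_isOpen hU le_rfl).mono hclU
  obtain ⟨K1, hK1⟩ := hcomp.exists_bound_of_continuousOn hθf
  obtain ⟨K2, hK2⟩ := hcomp.exists_bound_of_continuousOn hηf
  set K : ℝ := max (max K1 K2) 0 with hKdef
  have hK0 : (0 : ℝ) ≤ K := le_max_right _ _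
  refine ⟨6 * K + 1, by positivity, ?_⟩
  intro lam hlam T hT s hs t ht x hx
  have hxcl : x ∈ closure Ω := subset_closure hx
  have hxU : x ∈ U := hclU hxcl
  have hθx : DifferentiableAt ℝ θ x :=
    ((hθ1.differentiableOn one_ne_zero).differentiableAt (hU.mem_nhds hxU))
  have hηx : DifferentiableAt ℝ η x :=
    ((hη1.differentiableOn one_ne_zero).differentiableAt (hU.mem_nhds hxU))
  have ht0 : 0 < t := ht.1
  have htT : t < T := ht.2
  have hlam1 : (1 : ℝ) ≤ lam := by nlinarith
  -- positivity of s
  have hs0 : 0 < s := lt_of_lt_of_le (by positivity) hs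
  -- the denominator
  set P : ℝ := t ^ 5 * (T - t) ^ 5 with hPdef
  have hP : 0 < P := by
    have : 0 < T - t := by linarith
    positivity
  have hPT : P ≤ T ^ 10 := by
    have h1 : t ^ 5 ≤ T ^ 5 := pow_le_pow_left₀ ht0.le htT.le 5
    have h2 : (T - t) ^ 5 ≤ T ^ 5 := pow_le_pow_left₀ (by linarith) (by linarith) 5
    calc P ≤ T ^ 5 * T ^ 5 :=
          mul_le_mul h1 h2 (pow_nonneg (by linarith) 5) (by positivity)
      _ = T ^ 10 := by ring
  set A : ℝ := Real.exp (12 * lam * M) with hAdef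
  set e : ℝ := Real.exp (lam * (10 * M + η x)) with hedef
  have he1 : (1 : ℝ) ≤ e := by
    rw [hedef]
    have hηx0 : 0 < η x := hηpos x hx
    have : (0 : ℝ) ≤ lam * (10 * M + η x) := by nlinarith
    simpa using Real.one_le_exp this
  set ξ : ℝ := e / P with hξdef
  have hξpos : 0 < ξ := by positivity
  set E : ℝ := Real.exp (-(2 * s * ((A - e) / P))) with hEdef
  have hE : 0 < E := Real.exp_pos _
  -- the one-dimensional profile
  set F : ℝ → ℝ := fun u =>
    Real.exp (-(2 * s * ((A - Real.exp (lam * (10 * M + u))) / P))) *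
      (Real.exp (lam * (10 * M + u)) / P) ^ 3 with hFdef
  have hlin : HasDerivAt (fun u : ℝ => lam * (10 * M + u)) lam (η x) := by
    simpa using ((hasDerivAt_id (η x)).const_add (10 * M)).const_mul lam
  have hexp : HasDerivAt (fun u : ℝ => Real.exp (lam * (10 * M + u))) (e * lam) (η x) :=
    hlin.exp
  have h1 : HasDerivAt (fun u : ℝ => (A - Real.exp (lam * (10 * M + u))) / P)
      ((0 - e * lam) / P) (η x) := ((hasDerivAt_const (η x) A).sub hexp).div_const P
  have h2 : HasDerivAt (fun u : ℝ => -(2 * s * ((A - Real.exp (lam * (10 * M + u))) / P)))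
      (-(2 * s * ((0 - e * lam) / P))) (η x) := (h1.const_mul (2 * s)).neg
  have h3 : HasDerivAt
      (fun u : ℝ => Real.exp (-(2 * s * ((A - Real.exp (lam * (10 * M + u))) / P))))
      (E * -(2 * s * ((0 - e * lam) / P))) (η x) := h2.exp
  have h4 : HasDerivAt (fun u : ℝ => (Real.exp (lam * (10 * M + u)) / P) ^ 3)
      ((3 : ℕ) * (e / P) ^ 2 * (e * lam / P)) (η x) := by
    exact (hexp.div_const P).pow 3
  set d : ℝ := E * (2 * s * lam * ξ ^ 4 + 3 * lam * ξ ^ 3) with hddef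
  have hFd : HasDerivAt F d (η x) := by
    have := h3.mul h4
    refine this.congr_deriv ?_
    rw [hddef, hξdef, hEdef]
    field_simp
    ring
  have hd0 : 0 ≤ d := by
    have : 0 ≤ 2 * s * lam * ξ ^ 4 + 3 * lam * ξ ^ 3 := by positivity
    exact mul_nonneg hE.le this
  -- Fréchet derivative of the full function
  have hDf : HasFDerivAt (fun y => θ y * F (η y))
      (θ x • (d • fderiv ℝ η x) + F (η x) • fderiv ℝ θ x) x :=
    hθx.hasFDerivAt.mul (hFd.comp_hasFDerivAt x hηx.hasFDerivAt)
  -- identify the function in the statement with θ * F ∘ η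
  have hfun : (fun y => θ y *
      (Real.exp (-(2 * s * carlemanAlpha lam M T η t y)) *
        carlemanXi lam M T η t y ^ 3)) = fun y => θ y * F (η y) := by
    funext y
    simp only [hFdef, carlemanAlpha, carlemanXi, hAdef, hPdef]
  rw [hfun]
  have hgradnorm : ‖gradient (fun y => θ y * F (η y)) x‖ =
      ‖θ x • (d • fderiv ℝ η x) + F (η x) • fderiv ℝ θ x‖ := by
    rw [gradient, hDf.fderiv]
    exact LinearIsometryEquiv.norm_map _ _
  rw [hgradnorm]
  -- bounds
  have hθ0 : 0 ≤ θ x := (hθ01 x hxcl).1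
  have hθle : θ x ≤ 1 := (hθ01 x hxcl).2
  have hKη : ‖fderiv ℝ η x‖ ≤ K := (hK2 x hxcl).trans ((le_max_right K1 K2).trans (le_max_left _ _))
  have hKθ : ‖fderiv ℝ θ x‖ ≤ K := (hK1 x hxcl).trans ((le_max_left K1 K2).trans (le_max_left _ _))
  have hFx : F (η x) = E * ξ ^ 3 := by rw [hFdef, hEdef, hξdef, hedef, hAdef]
  have hFx0 : 0 ≤ F (η x) := by rw [hFx]; positivity
  have hbound : ‖θ x • (d • fderiv ℝ η x) + F (η x) • fderiv ℝ θ x‖ ≤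
      θ x * (d * K) + F (η x) * K := by
    refine (norm_add_le _ _).trans (add_le_add ?_ ?_)
    · rw [norm_smul, norm_smul, Real.norm_eq_abs, Real.norm_eq_abs, abs_of_nonneg hθ0,
        abs_of_nonneg hd0]
      exact mul_le_mul_of_nonneg_left (mul_le_mul_of_nonneg_left hKη hd0) hθ0
    · rw [norm_smul, Real.norm_eq_abs, abs_of_nonneg hFx0]
      exact mul_le_mul_of_nonneg_left hKθ hFx0
  refine hbound.trans ?_
  -- rewrite the RHS of the goal in terms of E, ξ
  have hα : carlemanAlpha lam M T η t x = (A - e) / P := by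
    rw [carlemanAlpha, hAdef, hedef, hPdef]
  have hξ' : carlemanXi lam M T η t x = ξ := by rw [carlemanXi, hξdef, hedef, hPdef]
  rw [hα, hξ', ← hEdef]
  -- key numeric inequality
  have hsξ : 1 ≤ s * ξ := by
    have hsT : T ^ 10 ≤ s := by nlinarith [pow_nonneg hT.le 5, pow_nonneg hT.le 10]
    have hξT : 1 / T ^ 10 ≤ ξ := by
      rw [hξdef]
      have hT10 : (0 : ℝ) < T ^ 10 := by positivity
      rw [div_le_div_iff₀ hT10 hP]
      nlinarith
    calc (1 : ℝ) = T ^ 10 * (1 / T ^ 10) := by field_simp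
      _ ≤ s * ξ := by
          apply mul_le_mul hsT hξT (by positivity) hs0.le
  have key : θ x * (d * K) + F (η x) * K ≤ (6 * K + 1) * s * lam * E * ξ ^ 4 := by
    rw [hFx, hddef]
    have step1 : θ x * (E * (2 * s * lam * ξ ^ 4 + 3 * lam * ξ ^ 3) * K) ≤
        E * (2 * s * lam * ξ ^ 4 + 3 * lam * ξ ^ 3) * K := by
      nlinarith [mul_nonneg hE.le (mul_nonneg (by positivity : (0:ℝ) ≤ 2 * s * lam * ξ ^ 4 + 3 * lam * ξ ^ 3) hK0)]
    have step2 : E * (2 * s * lam * ξ ^ 4 + 3 * lam * ξ ^ 3) * K + E * ξ ^ 3 * K ≤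
        (6 * K + 1) * s * lam * E * ξ ^ 4 := by
      have pure : 2 * s * lam * ξ ^ 4 * K + 3 * lam * ξ ^ 3 * K + ξ ^ 3 * K ≤
          (6 * K + 1) * s * lam * ξ ^ 4 := by
        have a1 : 0 ≤ K * (lam * ξ ^ 3) * (s * ξ - 1) := by
          apply mul_nonneg (mul_nonneg hK0 (by positivity)) (by linarith)
        have a2 : 0 ≤ K * ξ ^ 3 * (lam - 1) := by
          apply mul_nonneg (mul_nonneg hK0 (by positivity)) (by linarith)
        have a3 : 0 ≤ K * ξ ^ 3 * (s * ξ * lam - 1) := by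
          apply mul_nonneg (mul_nonneg hK0 (by positivity))
          nlinarith
        have a4 : 0 ≤ s * lam * ξ ^ 4 := by positivity
        nlinarith
      nlinarith [mul_le_mul_of_nonneg_left pure hE.le]
    linarith
  exact key
end
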